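/- arXiv:2511.07164 — 4 statements merged into one kernel-verified Lean document; each statement's English description precedes it below -/
import Mathlib

section
/- For any real number γ with 1/2 < γ < 1 and any positive integer p, the quantity [-p^γ] - [-(p+1)^γ] equals 1 if p = [n^(1/γ)] for some positive integer n, and equals 0 otherwise. -/
open scoped Classical

theorem stmt_0 (γ : ℝ) (hγ1 : 1/2 < γ) (hγ2 : γ < 1) (p : ℕ) (hp : 0 < p) :
    ⌊-((p : ℝ) ^ γ)⌋ - ⌊-(((p : ℝ) + 1) ^ γ)⌋
      = if ∃ n : ℕ, 0 < n ∧ (p : ℤ) = ⌊((n : ℝ)) ^ (1/γ)⌋ then 1 else 0 := by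
  have hγ0 : 0 < γ := by linarith
  have hp1 : (1 : ℝ) ≤ (p : ℝ) := by exact_mod_cast hp
  have hp0 : (0 : ℝ) ≤ (p : ℝ) := by linarith
  -- subadditivity: (p+1)^γ ≤ p^γ + 1
  have key : ((p : ℝ) + 1) ^ γ ≤ (p : ℝ) ^ γ + 1 := by
    have h := NNReal.rpow_add_le_add_rpow (p : NNReal) 1 hγ0.le hγ2.le
    have h2 := NNReal.coe_le_coe.2 h
    simpa [NNReal.coe_rpow] using h2
  -- p^γ ≥ 1
  have hpg1 : (1 : ℝ) ≤ (p : ℝ) ^ γ := by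
    calc (1:ℝ) = 1 ^ γ := (Real.one_rpow γ).symm
    _ ≤ (p : ℝ) ^ γ := Real.rpow_le_rpow (by norm_num) hp1 hγ0.le
  -- rewrite floors of negatives as ceilings
  rw [Int.floor_neg, Int.floor_neg]
  have hmono : (p : ℝ) ^ γ ≤ ((p : ℝ) + 1) ^ γ :=
    Real.rpow_le_rpow hp0 (by linarith) hγ0.le
  by_cases hcond : ∃ n : ℕ, 0 < n ∧ (p : ℤ) = ⌊((n : ℝ)) ^ (1/γ)⌋
  · rw [if_pos hcond]
    obtain ⟨n, hn, hpn⟩ := hcond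
    have hfl : ⌊((n : ℝ)) ^ (1/γ)⌋ = (p : ℤ) := hpn.symm
    rw [Int.floor_eq_iff] at hfl
    obtain ⟨h1, h2⟩ := hfl
    push_cast at h1 h2
    have hn0 : (0 : ℝ) ≤ (n : ℝ) := by positivity
    -- p^γ ≤ n
    have hA : (p : ℝ) ^ γ ≤ (n : ℝ) := by
      have := Real.rpow_le_rpow hp0 h1 hγ0.le
      rwa [← Real.rpow_mul hn0, one_div_mul_cancel hγ0.ne', Real.rpow_one] at this
    -- n < (p+1)^γ
    have hB : (n : ℝ) < ((p : ℝ) + 1) ^ γ := by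
      have hpow : ((n:ℝ) ^ (1/γ)) ^ γ < ((p : ℝ) + 1) ^ γ :=
        Real.rpow_lt_rpow (by positivity) h2 hγ0
      rwa [← Real.rpow_mul hn0, one_div_mul_cancel hγ0.ne', Real.rpow_one] at hpow
    have hc1 : ⌈(p : ℝ) ^ γ⌉ = (n : ℤ) := by
      have hle : ⌈(p : ℝ) ^ γ⌉ ≤ (n : ℤ) := Int.ceil_le.2 (by exact_mod_cast hA)
      have hge : ((n : ℤ) - 1) < ⌈(p : ℝ) ^ γ⌉ := by
        apply Int.lt_ceil.2
        push_cast
        linarith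
      omega
    have hc2 : ⌈((p : ℝ) + 1) ^ γ⌉ = (n : ℤ) + 1 := by
      have hle : ⌈((p : ℝ) + 1) ^ γ⌉ ≤ (n : ℤ) + 1 := by
        apply Int.ceil_le.2
        push_cast
        linarith
      have hge : (n : ℤ) < ⌈((p : ℝ) + 1) ^ γ⌉ := Int.lt_ceil.2 (by exact_mod_cast hB)
      omega
    rw [hc1, hc2]; ring
  · rw [if_neg hcond]
    -- no integer in [p^γ, (p+1)^γ)
    set m : ℤ := ⌈(p : ℝ) ^ γ⌉ with hm
    have hm1 : (0 : ℤ) < m := Int.lt_ceil.2 (by push_cast; linarith)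
    have hmle : (p : ℝ) ^ γ ≤ (m : ℝ) := Int.le_ceil _
    have hclaim : ((p : ℝ) + 1) ^ γ ≤ (m : ℝ) := by
      by_contra hlt
      push_neg at hlt
      apply hcond
      refine ⟨m.toNat, by omega, ?_⟩
      have hmn : ((m.toNat : ℕ) : ℝ) = (m : ℝ) := by
        exact_mod_cast Int.toNat_of_nonneg hm1.le
      symm
      rw [Int.floor_eq_iff]
      constructor
      · -- p ≤ (m)^(1/γ)
        have h1 : ((p:ℝ) ^ γ) ^ (1/γ) ≤ ((m.toNat : ℕ) : ℝ) ^ (1/γ) := by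
          apply Real.rpow_le_rpow (by positivity) _ (by positivity)
          rw [hmn]; exact hmle
        rwa [← Real.rpow_mul hp0, mul_one_div_cancel hγ0.ne', Real.rpow_one] at h1
      · -- m^(1/γ) < p+1
        have h2 : ((m.toNat : ℕ) : ℝ) ^ (1/γ) < (((p:ℝ) + 1) ^ γ) ^ (1/γ) := by
          apply Real.rpow_lt_rpow (by positivity) _ (by positivity)
          rw [hmn]; exact hlt
        rwa [← Real.rpow_mul (by linarith), mul_one_div_cancel hγ0.ne',
          Real.rpow_one] at h2
    have hc : ⌈((p : ℝ) + 1) ^ γ⌉ = m := by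
      have h1 : ⌈((p : ℝ) + 1) ^ γ⌉ ≤ m := Int.ceil_le.2 hclaim
      have h2 : m ≤ ⌈((p : ℝ) + 1) ^ γ⌉ := Int.ceil_le_ceil hmono
      omega
    rw [hc]; ring
end

section
/- Let 𝒫 be a finite set of positive integers. Then there is an absolute constant C such that for every nonzero integer j, the number of pairs (p, k) with p ∈ 𝒫, p + k ∈ 𝒫, and k(3p² + 3pk + k²) = j is at most C τ(|j|), where τ(|j|) is the number of divisors of |j|. Moreover, the only solution with j = 0 has k = 0. -/
theorem stmt_2 :
    ∃ C : ℝ, 0 < C ∧ ∀ P : Finset ℕ, (∀ p ∈ P, 0 < p) →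
      (∀ j : ℤ, j ≠ 0 →
        (Set.ncard {q : ℤ × ℤ | (∃ a ∈ P, (a : ℤ) = q.1) ∧ (∃ b ∈ P, (b : ℤ) = q.1 + q.2) ∧
            q.2 * (3 * q.1 ^ 2 + 3 * q.1 * q.2 + q.2 ^ 2) = j} : ℝ)
          ≤ C * (j.natAbs.divisors.card : ℝ)) ∧
      (∀ p k : ℤ, (∃ a ∈ P, (a : ℤ) = p) → (∃ b ∈ P, (b : ℤ) = p + k) →
        k * (3 * p ^ 2 + 3 * p * k + k ^ 2) = 0 → k = 0) := by
  refine ⟨4, by norm_num, fun P hP => ⟨fun j hj => ?_, ?_⟩⟩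
  · set S : Set (ℤ × ℤ) := {q : ℤ × ℤ | (∃ a ∈ P, (a : ℤ) = q.1) ∧
      (∃ b ∈ P, (b : ℤ) = q.1 + q.2) ∧
      q.2 * (3 * q.1 ^ 2 + 3 * q.1 * q.2 + q.2 ^ 2) = j} with hS
    set f : ℤ × ℤ → ℕ × Bool × Bool :=
      fun q => (q.2.natAbs, decide (0 ≤ q.2), decide (0 ≤ 6 * q.1 + 3 * q.2)) with hf
    set T : Finset (ℕ × Bool × Bool) :=
      j.natAbs.divisors ×ˢ (Finset.univ ×ˢ Finset.univ) with hT
    have hmaps : ∀ q ∈ S, f q ∈ (T : Set (ℕ × Bool × Bool)) := by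
      rintro ⟨p, k⟩ ⟨-, -, hjq⟩
      simp only [hT, hf, Finset.coe_product, Set.mem_prod, Finset.mem_coe,
        Nat.mem_divisors, Set.mem_univ, and_true]
      exact ⟨⟨Int.natAbs_dvd_natAbs.mpr ⟨_, hjq.symm⟩, fun h => hj (Int.natAbs_eq_zero.mp h)⟩, Finset.mem_univ _, Finset.mem_univ _⟩
    have hinj : Set.InjOn f S := by
      rintro ⟨p, k⟩ ⟨-, -, h1⟩ ⟨p', k'⟩ ⟨-, -, h2⟩ heq
      simp only [hf, Prod.mk.injEq, decide_eq_decide] at heq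
      obtain ⟨hnat, hsgn, hsgn2⟩ := heq
      have hkk : k = k' := by omega
      subst hkk
      have hk0 : k ≠ 0 := by rintro rfl; simp at h1; exact hj h1.symm
      have hE : 3 * p ^ 2 + 3 * p * k + k ^ 2 = 3 * p' ^ 2 + 3 * p' * k + k ^ 2 := by
        have := h1.trans h2.symm
        exact mul_left_cancel₀ hk0 this
      have hsq : (6 * p + 3 * k) ^ 2 = (6 * p' + 3 * k) ^ 2 := by nlinarith [hE]
      have : 6 * p + 3 * k = 6 * p' + 3 * k ∨ 6 * p + 3 * k = -(6 * p' + 3 * k) := by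
        have := sq_eq_sq_iff_eq_or_eq_neg.mp hsq
        tauto
      have hpp : p = p' := by omega
      simp [hpp]
    have hfin : S.Finite := by
      refine Set.Finite.of_finite_image (T.finite_toSet.subset ?_) hinj
      rintro x ⟨q, hq, rfl⟩; exact hmaps q hq
    have h1 : S.ncard = (f '' S).ncard := (Set.ncard_image_of_injOn hinj).symm
    have h2 : (f '' S).ncard ≤ T.card := by
      rw [← Set.ncard_coe_finset]
      exact Set.ncard_le_ncard (fun x ⟨q, hq, hxq⟩ => hxq ▸ hmaps q hq) T.finite_toSet
    have h3 : T.card = j.natAbs.divisors.card * 4 := by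
      simp [hT, Finset.card_product]
    have : (S.ncard : ℝ) ≤ 4 * (j.natAbs.divisors.card : ℝ) := by
      rw [h1]
      calc ((f '' S).ncard : ℝ) ≤ (T.card : ℝ) := by exact_mod_cast h2
        _ = 4 * (j.natAbs.divisors.card : ℝ) := by rw [h3]; push_cast; ring
    exact this
  · rintro p k ⟨a, ha, rfl⟩ ⟨b, hb, hbp⟩ h
    have hpa : (0 : ℤ) < a := by exact_mod_cast hP a ha
    have hpb : (0 : ℤ) < (a : ℤ) + k := by rw [← hbp]; exact_mod_cast hP b hb
    have hpos : 0 < 3 * (a : ℤ) ^ 2 + 3 * a * k + k ^ 2 := by nlinarith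
    rcases mul_eq_zero.mp h with h | h
    · exact h
    · omega
end

section
/- Let 𝒫 be a finite set of positive integers, and for integers k₁, k₂ let c*_j denote the number of quadruples (p, k₁, k₂) with p, p+k₁, p+k₂, p+k₁+k₂ all in 𝒫 and 3k₁k₂(2p+k₁+k₂) = j. Then c*_0 ≪ |𝒫|², and for j ≠ 0, c*_j ≤ τ₄(|j|), where τ₄ is the 4-dimensional divisor function. -/
/-- The 4-dimensional divisor function: the number of ordered factorizations of `n`
into 4 positive factors. -/
noncomputable def tau4 (n : ℕ) : ℕ :=
  Nat.card {q : ℕ × ℕ × ℕ × ℕ // q.1 * q.2.1 * q.2.2.1 * q.2.2.2 = n}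

private lemma tau4_set_finite {n : ℕ} (hn : n ≠ 0) :
    {q : ℕ × ℕ × ℕ × ℕ | q.1 * q.2.1 * q.2.2.1 * q.2.2.2 = n}.Finite := by
  apply Set.Finite.subset (Set.finite_Icc (1,1,1,1) (n,n,n,n))
  rintro ⟨a,b,c,d⟩ h
  simp only [Set.mem_setOf_eq] at h
  have hnpos : 0 < n := Nat.pos_of_ne_zero hn
  have ha : a ≤ n := Nat.le_of_dvd hnpos ⟨b*c*d, by rw [← h]; ring⟩
  have hb : b ≤ n := Nat.le_of_dvd hnpos ⟨a*c*d, by rw [← h]; ring⟩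
  have hc : c ≤ n := Nat.le_of_dvd hnpos ⟨a*b*d, by rw [← h]; ring⟩
  have hd : d ≤ n := Nat.le_of_dvd hnpos ⟨a*b*c, by rw [← h]; ring⟩
  have hprod : a * b * c * d ≠ 0 := by rw [h]; exact hn
  simp only [Nat.mul_ne_zero_iff] at hprod
  simp only [Set.mem_Icc, Prod.le_def]
  omega

private lemma tau4_eq (n : ℕ) :
    tau4 n = Set.ncard {q : ℕ × ℕ × ℕ × ℕ | q.1 * q.2.1 * q.2.2.1 * q.2.2.2 = n} := by
  rw [tau4]
  exact Nat.card_coe_set_eq _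

private lemma auxj (P : Finset ℕ) (hP : ∀ p ∈ P, 0 < p) (j : ℤ) (hj : j ≠ 0) :
    Set.ncard {q : ℤ × ℤ × ℤ |
        (∃ a ∈ P, (a : ℤ) = q.1) ∧ (∃ b ∈ P, (b : ℤ) = q.1 + q.2.1) ∧
        (∃ c ∈ P, (c : ℤ) = q.1 + q.2.2) ∧ (∃ d ∈ P, (d : ℤ) = q.1 + q.2.1 + q.2.2) ∧
        3 * q.2.1 * q.2.2 * (2 * q.1 + q.2.1 + q.2.2) = j}
      ≤ tau4 j.natAbs := by
  set S := {q : ℤ × ℤ × ℤ |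
        (∃ a ∈ P, (a : ℤ) = q.1) ∧ (∃ b ∈ P, (b : ℤ) = q.1 + q.2.1) ∧
        (∃ c ∈ P, (c : ℤ) = q.1 + q.2.2) ∧ (∃ d ∈ P, (d : ℤ) = q.1 + q.2.1 + q.2.2) ∧
        3 * q.2.1 * q.2.2 * (2 * q.1 + q.2.1 + q.2.2) = j} with hSdef
  set T := {q : ℕ × ℕ × ℕ × ℕ | q.1 * q.2.1 * q.2.2.1 * q.2.2.2 = j.natAbs} with hTdef
  set f : ℤ × ℤ × ℤ → ℕ × ℕ × ℕ × ℕ := fun q =>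
    if 0 < q.2.1 then (3, q.2.1.natAbs, q.2.2.natAbs, (2 * q.1 + q.2.1 + q.2.2).natAbs)
    else (1, (3 * q.2.1).natAbs, q.2.2.natAbs, (2 * q.1 + q.2.1 + q.2.2).natAbs) with hfdef
  -- basic facts about members of S
  have hk1 : ∀ q ∈ S, q.2.1 ≠ 0 := by
    rintro q ⟨-, -, -, -, h⟩ h0
    exact hj (by rw [← h, h0]; ring)
  have hk2 : ∀ q ∈ S, q.2.2 ≠ 0 := by
    rintro q ⟨-, -, -, -, h⟩ h0
    exact hj (by rw [← h, h0]; ring)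
  have hm : ∀ q ∈ S, 0 < 2 * q.1 + q.2.1 + q.2.2 := by
    rintro q ⟨⟨a, haP, ha⟩, -, -, ⟨d, hdP, hd⟩, -⟩
    have ha0 : (0:ℤ) < a := by exact_mod_cast hP a haP
    have hd0 : (0:ℤ) < d := by exact_mod_cast hP d hdP
    linarith [ha, hd, ha0, hd0]
  have hmaps : ∀ q ∈ S, f q ∈ T := by
    intro q hq
    obtain ⟨-, -, -, -, h⟩ := hq
    have : j.natAbs = (3 * q.2.1).natAbs * q.2.2.natAbs * (2 * q.1 + q.2.1 + q.2.2).natAbs := by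
      rw [← h, ← Int.natAbs_mul, ← Int.natAbs_mul]
    by_cases hpos : 0 < q.2.1 <;>
      simp only [hfdef, hpos, if_true, if_false, hTdef, Set.mem_setOf_eq, this] <;>
      simp [Int.natAbs_mul]
  have hinj : Set.InjOn f S := by
    rintro ⟨p, k1, k2⟩ hq ⟨p', k1', k2'⟩ hq' hfq
    have h1 := hk1 _ hq
    have h1' := hk1 _ hq'
    have hm1 := hm _ hq
    have hm1' := hm _ hq'
    obtain ⟨-, -, -, -, he⟩ := hq
    obtain ⟨-, -, -, -, he'⟩ := hq'
    simp only at h1 h1' hm1 hm1' he he' ⊢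
    by_cases hpos : 0 < k1 <;> by_cases hpos' : 0 < k1' <;>
      simp only [hfdef, hpos, hpos', if_true, if_false, Prod.mk.injEq] at hfq
    · obtain ⟨-, e1, e2, e3⟩ := hfq
      have hk : k1 = k1' := by omega
      have hmm : 2 * p + k1 + k2 = 2 * p' + k1' + k2' := by omega
      have hkk : k2 = k2' := by
        have h2 : 3 * k1 * k2' * (2 * p + k1 + k2) = j := by rw [hmm, hk]; exact he'
        have hcan : k2 * (3 * k1 * (2 * p + k1 + k2)) = k2' * (3 * k1 * (2 * p + k1 + k2)) := by
          linear_combination he - h2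
        have hne : (3 * k1 * (2 * p + k1 + k2)) ≠ 0 := mul_ne_zero (by omega) (by omega)
        exact mul_right_cancel₀ hne hcan
      simp only [Prod.mk.injEq]
      exact ⟨by omega, hk, hkk⟩
    · exact absurd hfq.1 (by norm_num)
    · exact absurd hfq.1 (by norm_num)
    · obtain ⟨-, e1, e2, e3⟩ := hfq
      have hk : k1 = k1' := by omega
      have hmm : 2 * p + k1 + k2 = 2 * p' + k1' + k2' := by omega
      have hkk : k2 = k2' := by
        have h2 : 3 * k1 * k2' * (2 * p + k1 + k2) = j := by rw [hmm, hk]; exact he'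
        have hcan : k2 * (3 * k1 * (2 * p + k1 + k2)) = k2' * (3 * k1 * (2 * p + k1 + k2)) := by
          linear_combination he - h2
        have hne : (3 * k1 * (2 * p + k1 + k2)) ≠ 0 := mul_ne_zero (by omega) (by omega)
        exact mul_right_cancel₀ hne hcan
      simp only [Prod.mk.injEq]
      exact ⟨by omega, hk, hkk⟩
  have hjn : j.natAbs ≠ 0 := Int.natAbs_ne_zero.mpr hj
  calc S.ncard = (f '' S).ncard := (Set.ncard_image_of_injOn hinj).symm
    _ ≤ T.ncard := Set.ncard_le_ncard
        (by rintro x ⟨q, hq, rfl⟩; exact hmaps q hq) (tau4_set_finite hjn)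
    _ = tau4 j.natAbs := (tau4_eq _).symm

private lemma aux0 (P : Finset ℕ) (hP : ∀ p ∈ P, 0 < p) :
    Set.ncard {q : ℤ × ℤ × ℤ |
        (∃ a ∈ P, (a : ℤ) = q.1) ∧ (∃ b ∈ P, (b : ℤ) = q.1 + q.2.1) ∧
        (∃ c ∈ P, (c : ℤ) = q.1 + q.2.2) ∧ (∃ d ∈ P, (d : ℤ) = q.1 + q.2.1 + q.2.2) ∧
        3 * q.2.1 * q.2.2 * (2 * q.1 + q.2.1 + q.2.2) = 0}
      ≤ 2 * P.card ^ 2 := by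
  set S := {q : ℤ × ℤ × ℤ |
        (∃ a ∈ P, (a : ℤ) = q.1) ∧ (∃ b ∈ P, (b : ℤ) = q.1 + q.2.1) ∧
        (∃ c ∈ P, (c : ℤ) = q.1 + q.2.2) ∧ (∃ d ∈ P, (d : ℤ) = q.1 + q.2.1 + q.2.2) ∧
        3 * q.2.1 * q.2.2 * (2 * q.1 + q.2.1 + q.2.2) = 0} with hSdef
  set T : Set (ℕ × ℕ × Bool) := ↑(P ×ˢ P ×ˢ (Finset.univ : Finset Bool)) with hTdef
  set f : ℤ × ℤ × ℤ → ℕ × ℕ × Bool := fun q =>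
    if q.2.1 = 0 then (q.1.natAbs, (q.1 + q.2.2).natAbs, true)
    else (q.1.natAbs, (q.1 + q.2.1).natAbs, false) with hfdef
  have key : ∀ q ∈ S, q.2.1 = 0 ∨ q.2.2 = 0 := by
    rintro q ⟨⟨a, haP, ha⟩, -, -, ⟨d, hdP, hd⟩, h⟩
    have ha0 : (0:ℤ) < a := by exact_mod_cast hP a haP
    have hd0 : (0:ℤ) < d := by exact_mod_cast hP d hdP
    have hmpos : 0 < 2 * q.1 + q.2.1 + q.2.2 := by linarith [ha, hd]
    rcases mul_eq_zero.mp h with h' | h'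
    · rcases mul_eq_zero.mp h' with h'' | h''
      · rcases mul_eq_zero.mp h'' with h3 | h3
        · norm_num at h3
        · exact Or.inl h3
      · exact Or.inr h''
    · omega
  have hmaps : ∀ q ∈ S, f q ∈ T := by
    rintro q ⟨⟨a, haP, ha⟩, ⟨b, hbP, hb⟩, ⟨c, hcP, hc⟩, -, -⟩
    have h1 : q.1.natAbs = a := by omega
    have h2 : (q.1 + q.2.2).natAbs = c := by omega
    have h3 : (q.1 + q.2.1).natAbs = b := by omega
    by_cases hz : q.2.1 = 0 <;>
      simp only [hfdef, hz, if_true, if_false, hTdef, Finset.coe_product,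
        Set.mem_prod, Finset.mem_coe, h1, h2, h3] <;>
      simp [h1, h2, h3, haP, hbP, hcP, hz]
  have hinj : Set.InjOn f S := by
    rintro ⟨p, k1, k2⟩ hq ⟨p', k1', k2'⟩ hq' hfq
    have hkey := key _ hq
    have hkey' := key _ hq'
    obtain ⟨⟨a, haP, ha⟩, ⟨b, hbP, hb⟩, ⟨c, hcP, hc⟩, -, -⟩ := hq
    obtain ⟨⟨a', haP', ha'⟩, ⟨b', hbP', hb'⟩, ⟨c', hcP', hc'⟩, -, -⟩ := hq'
    simp only at hkey hkey' ha hb hc ha' hb' hc'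
    have hp0 : (0:ℤ) ≤ p := by omega
    have hp0' : (0:ℤ) ≤ p' := by omega
    have hpk2 : (0:ℤ) ≤ p + k2 := by omega
    have hpk2' : (0:ℤ) ≤ p' + k2' := by omega
    have hpk1 : (0:ℤ) ≤ p + k1 := by omega
    have hpk1' : (0:ℤ) ≤ p' + k1' := by omega
    by_cases hz : k1 = 0 <;> by_cases hz' : k1' = 0 <;>
      simp only [hfdef, hz, hz', if_true, if_false, Prod.mk.injEq] at hfq <;>
      simp only [Prod.mk.injEq]
    · exact ⟨by omega, by omega, by omega⟩
    · simp at hfq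
    · simp at hfq
    · have h2 : k2 = 0 := by tauto
      have h2' : k2' = 0 := by tauto
      exact ⟨by omega, by omega, by omega⟩
  have hTfin : T.Finite := (P ×ˢ P ×ˢ (Finset.univ : Finset Bool)).finite_toSet
  calc S.ncard = (f '' S).ncard := (Set.ncard_image_of_injOn hinj).symm
    _ ≤ T.ncard := Set.ncard_le_ncard
        (by rintro x ⟨q, hq, rfl⟩; exact hmaps q hq) hTfin
    _ = 2 * P.card ^ 2 := by
        rw [hTdef, Set.ncard_coe_finset]
        simp [Finset.card_product]
        ring

theorem stmt_7 :
    ∃ C : ℝ, 0 < C ∧ ∀ P : Finset ℕ, (∀ p ∈ P, 0 < p) →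
      ((Set.ncard {q : ℤ × ℤ × ℤ |
          (∃ a ∈ P, (a : ℤ) = q.1) ∧ (∃ b ∈ P, (b : ℤ) = q.1 + q.2.1) ∧
          (∃ c ∈ P, (c : ℤ) = q.1 + q.2.2) ∧ (∃ d ∈ P, (d : ℤ) = q.1 + q.2.1 + q.2.2) ∧
          3 * q.2.1 * q.2.2 * (2 * q.1 + q.2.1 + q.2.2) = 0} : ℝ)
        ≤ C * (P.card : ℝ) ^ 2) ∧
      (∀ j : ℤ, j ≠ 0 →
        Set.ncard {q : ℤ × ℤ × ℤ |
          (∃ a ∈ P, (a : ℤ) = q.1) ∧ (∃ b ∈ P, (b : ℤ) = q.1 + q.2.1) ∧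
          (∃ c ∈ P, (c : ℤ) = q.1 + q.2.2) ∧ (∃ d ∈ P, (d : ℤ) = q.1 + q.2.1 + q.2.2) ∧
          3 * q.2.1 * q.2.2 * (2 * q.1 + q.2.1 + q.2.2) = j}
          ≤ tau4 j.natAbs) := by
  refine ⟨2, by norm_num, fun P hP => ⟨?_, fun j hj => auxj P hP j hj⟩⟩
  have h := aux0 P hP
  calc (Set.ncard _ : ℝ) ≤ ((2 * P.card ^ 2 : ℕ) : ℝ) := by exact_mod_cast h
    _ = 2 * (P.card : ℝ) ^ 2 := by push_cast; ring
end

section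
/- Let m, n be positive integers and suppose L(q) = Σ_{i=1}^m A_i q^{u_i} + Σ_{j=1}^n B_j q^{-v_j} where all A_i, B_j, u_i, v_j are positive real numbers, and let 0 ≤ Q₁ ≤ Q₂. Then there exists q with Q₁ ≤ q ≤ Q₂ such that L(q) ≪ Σ_{i=1}^m Σ_{j=1}^n (A_i^{v_j} B_j^{u_i})^{1/(u_i+v_j)} + Σ_{i=1}^m A_i Q₁^{u_i} + Σ_{j=1}^n B_j Q₂^{-v_j}, with implied constant depending only on m and n. -/
open Real Finset

private lemma min_le_balance {A B u v q : ℝ} (hA : 0 < A) (hB : 0 < B)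
    (hu : 0 < u) (hv : 0 < v) (hq : 0 < q) :
    min (A * q ^ u) (B * q ^ (-v)) ≤ (A ^ v * B ^ u) ^ (1 / (u + v)) := by
  set a := A * q ^ u with ha
  set b := B * q ^ (-v) with hb
  have hapos : 0 < a := mul_pos hA (rpow_pos_of_pos hq _)
  have hbpos : 0 < b := mul_pos hB (rpow_pos_of_pos hq _)
  have hmpos : 0 < min a b := lt_min hapos hbpos
  have huv : 0 < u + v := add_pos hu hv
  have e1 : a ^ v = A ^ v * q ^ (u * v) := by
    rw [ha, Real.mul_rpow hA.le (rpow_nonneg hq.le _), ← Real.rpow_mul hq.le]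
  have e2 : b ^ u = B ^ u * q ^ (-v * u) := by
    rw [hb, Real.mul_rpow hB.le (rpow_nonneg hq.le _), ← Real.rpow_mul hq.le]
  have e3 : q ^ (u * v) * q ^ (-v * u) = 1 := by
    rw [← Real.rpow_add hq]
    have : u * v + -v * u = 0 := by ring
    rw [this, Real.rpow_zero]
  have hab : a ^ v * b ^ u = A ^ v * B ^ u := by
    rw [e1, e2]
    calc A ^ v * q ^ (u * v) * (B ^ u * q ^ (-v * u))
        = A ^ v * B ^ u * (q ^ (u * v) * q ^ (-v * u)) := by ring
      _ = A ^ v * B ^ u := by rw [e3, mul_one]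
  have hmin : (min a b) ^ (u + v) ≤ A ^ v * B ^ u := by
    rw [Real.rpow_add hmpos, ← hab, mul_comm (min a b ^ u)]
    exact mul_le_mul (Real.rpow_le_rpow hmpos.le (min_le_left a b) hv.le)
      (Real.rpow_le_rpow hmpos.le (min_le_right a b) hu.le)
      (rpow_nonneg hmpos.le _) (rpow_nonneg hapos.le _)
  calc min a b = ((min a b) ^ (u + v)) ^ (1 / (u + v)) := by
        rw [← Real.rpow_mul hmpos.le, mul_one_div_cancel huv.ne', Real.rpow_one]
    _ ≤ (A ^ v * B ^ u) ^ (1 / (u + v)) :=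
        Real.rpow_le_rpow (rpow_nonneg hmpos.le _) hmin (by positivity)

set_option maxHeartbeats 1000000 in
theorem stmt_14 (m n : ℕ) (hm : 0 < m) (hn : 0 < n) :
    ∃ C : ℝ, 0 < C ∧ ∀ (A : Fin m → ℝ) (B : Fin n → ℝ) (u : Fin m → ℝ) (v : Fin n → ℝ),
      (∀ i, 0 < A i) → (∀ j, 0 < B j) → (∀ i, 0 < u i) → (∀ j, 0 < v j) →
      ∀ Q₁ Q₂ : ℝ, 0 ≤ Q₁ → Q₁ ≤ Q₂ →
      ∃ q : ℝ, Q₁ ≤ q ∧ q ≤ Q₂ ∧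
        (∑ i, A i * q ^ u i) + (∑ j, B j * q ^ (-(v j)))
          ≤ C * ((∑ i, ∑ j, (A i ^ v j * B j ^ u i) ^ (1 / (u i + v j))) +
                 (∑ i, A i * Q₁ ^ u i) + (∑ j, B j * Q₂ ^ (-(v j)))) := by
  refine ⟨2 * m * n, by positivity, ?_⟩
  intro A B u v hA hB hu hv Q₁ Q₂ hQ₁ hQ₁₂
  set F : ℝ → ℝ := fun q => ∑ i, A i * q ^ u i with hF
  set G : ℝ → ℝ := fun q => ∑ j, B j * q ^ (-(v j)) with hG
  set S₁ : ℝ := ∑ i, ∑ j, (A i ^ v j * B j ^ u i) ^ (1 / (u i + v j)) with hS₁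
  have hterm : ∀ (i : Fin m) (j : Fin n),
      0 ≤ (A i ^ v j * B j ^ u i) ^ (1 / (u i + v j)) := fun i j =>
    Real.rpow_nonneg (mul_nonneg (Real.rpow_nonneg (hA i).le _)
      (Real.rpow_nonneg (hB j).le _)) _
  have hS₁nn : 0 ≤ S₁ :=
    Finset.sum_nonneg fun i _ => Finset.sum_nonneg fun j _ => hterm i j
  have hFnn : ∀ q : ℝ, 0 ≤ q → 0 ≤ F q := fun q hq =>
    Finset.sum_nonneg fun i _ => mul_nonneg (hA i).le (Real.rpow_nonneg hq _)
  have hGnn : ∀ q : ℝ, 0 ≤ q → 0 ≤ G q := fun q hq =>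
    Finset.sum_nonneg fun j _ => mul_nonneg (hB j).le (Real.rpow_nonneg hq _)
  have hm' : (1 : ℝ) ≤ m := by exact_mod_cast hm
  have hn' : (1 : ℝ) ≤ n := by exact_mod_cast hn
  have hmn1 : (1 : ℝ) ≤ m * n := by nlinarith
  have h2mn : (2 : ℝ) ≤ 2 * m * n := by nlinarith
  have hFQ₁ : 0 ≤ F Q₁ := hFnn Q₁ hQ₁
  have hGQ₂ : 0 ≤ G Q₂ := hGnn Q₂ (le_trans hQ₁ hQ₁₂)
  have hsum : 0 ≤ S₁ + F Q₁ + G Q₂ := by linarith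
  by_cases h2 : F Q₂ ≤ G Q₂
  · -- take q = Q₂
    refine ⟨Q₂, hQ₁₂, le_refl _, ?_⟩
    calc F Q₂ + G Q₂ ≤ 2 * G Q₂ := by linarith
      _ ≤ 2 * (S₁ + F Q₁ + G Q₂) := by linarith
      _ ≤ 2 * m * n * (S₁ + F Q₁ + G Q₂) := mul_le_mul_of_nonneg_right h2mn hsum
  by_cases h1 : G Q₁ ≤ F Q₁
  · -- take q = Q₁
    refine ⟨Q₁, le_refl _, hQ₁₂, ?_⟩
    calc F Q₁ + G Q₁ ≤ 2 * F Q₁ := by linarith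
      _ ≤ 2 * (S₁ + F Q₁ + G Q₂) := by linarith
      _ ≤ 2 * m * n * (S₁ + F Q₁ + G Q₂) := mul_le_mul_of_nonneg_right h2mn hsum
  push_neg at h1 h2
  -- Now F Q₁ < G Q₁ and G Q₂ < F Q₂; in particular Q₁ > 0.
  have hQ₁pos : 0 < Q₁ := by
    rcases eq_or_lt_of_le hQ₁ with h | h
    · exfalso
      have : G Q₁ = 0 := by
        rw [hG, ← h]
        apply Finset.sum_eq_zero; intro j _
        rw [Real.zero_rpow (by have := hv j; intro hc; simp at hc; linarith), mul_zero]
      linarith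
    · exact h
  -- continuity of F - G on [Q₁, Q₂]
  have hcont : ContinuousOn (fun q => F q - G q) (Set.Icc Q₁ Q₂) := by
    apply ContinuousOn.sub
    · apply continuousOn_finset_sum
      intro i _
      apply ContinuousOn.mul continuousOn_const
      intro x hx
      exact (Real.continuousAt_rpow_const x (u i)
        (Or.inl (by have := hx.1; intro hc; rw [hc] at this; linarith))).continuousWithinAt
    · apply continuousOn_finset_sum
      intro j _
      apply ContinuousOn.mul continuousOn_const
      intro x hx
      exact (Real.continuousAt_rpow_const x (-(v j))
        (Or.inl (by have := hx.1; intro hc; rw [hc] at this; linarith))).continuousWithinAt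
  have hIVT := intermediate_value_Icc hQ₁₂ hcont
  have h0mem : (0 : ℝ) ∈ Set.Icc (F Q₁ - G Q₁) (F Q₂ - G Q₂) :=
    ⟨by linarith, by linarith⟩
  obtain ⟨q, hqmem, hq0⟩ := hIVT h0mem
  have hqpos : 0 < q := lt_of_lt_of_le hQ₁pos hqmem.1
  have hFG : F q = G q := by
    have := sub_eq_zero.mp hq0
    linarith [this]
  refine ⟨q, hqmem.1, hqmem.2, ?_⟩
  set M := F q with hM
  have hMpos : 0 < M := by
    apply Finset.sum_pos
    · intro i _
      exact mul_pos (hA i) (Real.rpow_pos_of_pos hqpos _)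
    · exact ⟨⟨0, hm⟩, Finset.mem_univ _⟩
  -- find i with M/m ≤ A i * q ^ u i and j with M/n ≤ B j * q ^ (-(v j))
  obtain ⟨i, -, hi⟩ := Finset.exists_le_of_sum_le (s := (Finset.univ : Finset (Fin m)))
    (f := fun _ => M / m) (g := fun i => A i * q ^ u i)
    ⟨⟨0, hm⟩, Finset.mem_univ _⟩
    (by rw [Finset.sum_const, Finset.card_univ, Fintype.card_fin, nsmul_eq_mul,
          mul_div_cancel₀ _ (by exact_mod_cast hm.ne' : (m:ℝ) ≠ 0)])
  obtain ⟨j, -, hj⟩ := Finset.exists_le_of_sum_le (s := (Finset.univ : Finset (Fin n)))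
    (f := fun _ => M / n) (g := fun j => B j * q ^ (-(v j)))
    ⟨⟨0, hn⟩, Finset.mem_univ _⟩
    (by rw [Finset.sum_const, Finset.card_univ, Fintype.card_fin, nsmul_eq_mul,
          mul_div_cancel₀ _ (by exact_mod_cast hn.ne' : (n:ℝ) ≠ 0)]
        exact hFG.le)
  have hkey := min_le_balance (hA i) (hB j) (hu i) (hv j) hqpos
  have hmn0 : (0 : ℝ) < m * n := by linarith
  have hmle : M / (m * n) ≤ min (A i * q ^ u i) (B j * q ^ (-(v j))) := by
    apply le_min
    · calc M / (m * n) ≤ M / m :=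
            div_le_div_of_nonneg_left hMpos.le (by linarith) (by nlinarith)
        _ ≤ _ := hi
    · calc M / (m * n) ≤ M / n :=
            div_le_div_of_nonneg_left hMpos.le (by linarith) (by nlinarith)
        _ ≤ _ := hj
  have hcS : (A i ^ v j * B j ^ u i) ^ (1 / (u i + v j)) ≤ S₁ := by
    rw [hS₁]
    calc (A i ^ v j * B j ^ u i) ^ (1 / (u i + v j))
        ≤ ∑ j', (A i ^ v j' * B j' ^ u i) ^ (1 / (u i + v j')) :=
          Finset.single_le_sum (f := fun j' => (A i ^ v j' * B j' ^ u i) ^ (1 / (u i + v j')))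
            (fun j' _ => hterm i j') (Finset.mem_univ j)
      _ ≤ _ := Finset.single_le_sum
            (f := fun i' => ∑ j', (A i' ^ v j' * B j' ^ u i') ^ (1 / (u i' + v j')))
            (fun i' _ => Finset.sum_nonneg fun j' _ => hterm i' j') (Finset.mem_univ i)
  have hMS : M ≤ m * n * S₁ := by
    have h1 : M / (m * n) ≤ S₁ := le_trans hmle (le_trans hkey hcS)
    calc M = (m * n) * (M / (m * n)) := by field_simp
      _ ≤ m * n * S₁ := mul_le_mul_of_nonneg_left h1 hmn0.le
  calc F q + G q = 2 * M := by rw [← hFG]; ring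
    _ ≤ 2 * (m * n * S₁) := by linarith
    _ = 2 * m * n * S₁ := by ring
    _ ≤ 2 * m * n * (S₁ + F Q₁ + G Q₂) :=
        mul_le_mul_of_nonneg_left (by linarith) (by linarith)
end
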